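/- Suppose f : ℝ^D → ℝ is differentiable with L₀-Lipschitz gradient and is c-strongly convex with 0 < c < L₀, with minimizer θ*. Let 0 < α < 2/L₀ and suppose gradient iterates θ_{k+1} = θ_k − α G_k where ‖G_k − ∇f(θ_k)‖ ≤ ε for all k and ‖∇f(θ)‖ ≤ M for all θ along the iteration. Then limsup_{k→∞} (f(θ_k) − f(θ*)) ≤ (α L₀ ε² + (2αL₀+2) ε M) / (4c − 2αL₀c). -/

import Mathlib

/-!
The descent lemma for an `L₀`-smooth `f`, applied to the step `θ - α G` with `‖G - ∇f θ‖ ≤ ε`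
and `‖∇f θ‖ ≤ M`, bounds the decrease of `f` by `α (1 - α L₀ / 2) ‖∇f θ‖²` up to an error
`b = α² L₀ ε² / 2 + α (α L₀ + 1) ε M`. Strong convexity gives the Polyak–Łojasiewicz inequality
`2 c (f θ - f θ*) ≤ ‖∇f θ‖²`, so the gap `e k = f (θ k) - f θ*` obeys
`e (k + 1) ≤ ρ e k + b` with `ρ = 1 - α c (2 - α L₀) ∈ [0, 1)`, and its limsup is at most
`b / (1 - ρ)`.
-/

open Filter Set

theorem le_add_deriv_add_of_deriv_le_add_mul {φ φ' : ℝ → ℝ} {K : ℝ}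
    (hφ : ∀ t, HasDerivAt φ (φ' t) t) (hφ' : ∀ t ∈ Ico (0 : ℝ) 1, φ' t ≤ φ' 0 + K * t) :
    φ 1 ≤ φ 0 + φ' 0 + K / 2 := by
  set B : ℝ → ℝ := fun t => φ 0 + t * φ' 0 + K / 2 * t ^ 2
  have hB : ∀ t, HasDerivAt B (φ' 0 + K * t) t := fun t => by
    refine ((((hasDerivAt_id' t).mul_const (φ' 0)).const_add (φ 0)).add
      ((hasDerivAt_pow 2 t).const_mul (K / 2))).congr_deriv ?_
    norm_num; ring
  have := image_le_of_deriv_right_le_deriv_boundary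
    (fun t _ => (hφ t).continuousAt.continuousWithinAt) (fun t _ => (hφ t).hasDerivWithinAt)
    (by simp [B]) (fun t _ => (hB t).continuousAt.continuousWithinAt)
    (fun t _ => (hB t).hasDerivWithinAt) hφ' (right_mem_Icc.2 zero_le_one)
  simpa [B] using this

theorem limsup_le_div_of_le_mul_add {e : ℕ → ℝ} {ρ b m : ℝ} (hρ₀ : 0 ≤ ρ) (hρ₁ : ρ < 1)
    (hm : ∀ k, m ≤ e k) (he : ∀ k, e (k + 1) ≤ ρ * e k + b) :
    limsup e atTop ≤ b / (1 - ρ) := by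
  set R := b / (1 - ρ)
  have hb : b = (1 - ρ) * R := (mul_div_cancel₀ b (sub_pos.2 hρ₁).ne').symm
  have hgeom : ∀ k, e k ≤ ρ ^ k * (e 0 - R) + R := fun k => by
    have := le_geom (u := fun k => e k - R) hρ₀ k fun j _ => by linarith [he j]
    linarith
  have hlim : Tendsto (fun k => ρ ^ k * (e 0 - R) + R) atTop (nhds R) := by
    simpa using ((tendsto_pow_atTop_nhds_zero_of_lt_one hρ₀ hρ₁).mul_const (e 0 - R)).add_const R
  calc limsup e atTop ≤ limsup (fun k => ρ ^ k * (e 0 - R) + R) atTop :=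
        limsup_le_limsup (Eventually.of_forall hgeom) (isCoboundedUnder_le_of_le atTop hm)
          hlim.isBoundedUnder_le
    _ = R := hlim.limsup_eq

section InnerProductSpace

variable {E : Type*} [NormedAddCommGroup E] [InnerProductSpace ℝ E] [CompleteSpace E]
  {f : E → ℝ} {L c : ℝ}

theorem le_add_inner_gradient_add_of_lipschitz_gradient (hf : Differentiable ℝ f)
    (hlip : ∀ x y, ‖gradient f x - gradient f y‖ ≤ L * ‖x - y‖) (x y : E) :
    f y ≤ f x + inner ℝ (gradient f x) (y - x) + L / 2 * ‖y - x‖ ^ 2 := by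
  set v := y - x
  have hline : ∀ t : ℝ, HasDerivAt (fun s : ℝ => f (x + s • v))
      (inner ℝ (gradient f (x + t • v)) v) t := fun t => by
    have hpath : HasDerivAt (fun s : ℝ => x + s • v) v t := by
      simpa using ((hasDerivAt_id t).smul_const v).const_add x
    simpa [Function.comp_def] using
      (hf (x + t • v)).hasGradientAt.hasFDerivAt.comp_hasDerivAt t hpath
  have hslope : ∀ t ∈ Ico (0 : ℝ) 1, inner ℝ (gradient f (x + t • v)) v
      ≤ inner ℝ (gradient f (x + (0 : ℝ) • v)) v + L * ‖v‖ ^ 2 * t := fun t ht => by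
    have hdist : ‖x + t • v - x‖ = t * ‖v‖ := by simp [norm_smul, abs_of_nonneg ht.1]
    calc inner ℝ (gradient f (x + t • v)) v
        = inner ℝ (gradient f x) v + inner ℝ (gradient f (x + t • v) - gradient f x) v := by
          rw [inner_sub_left]; ring
      _ ≤ inner ℝ (gradient f x) v + ‖gradient f (x + t • v) - gradient f x‖ * ‖v‖ := by
          gcongr; exact real_inner_le_norm _ _
      _ ≤ inner ℝ (gradient f x) v + L * (t * ‖v‖) * ‖v‖ := by
          gcongr; exact hdist ▸ hlip _ _
      _ = _ := by simp only [zero_smul, add_zero]; ring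
  have := le_add_deriv_add_of_deriv_le_add_mul hline hslope
  simp only [zero_smul, add_zero, one_smul, v, add_sub_cancel] at this
  linarith

theorem two_mul_sub_le_norm_gradient_sq (hc : 0 < c) {x y : E}
    (hconv : f y ≥ f x + inner ℝ (gradient f x) (y - x) + c / 2 * ‖y - x‖ ^ 2) :
    2 * c * (f x - f y) ≤ ‖gradient f x‖ ^ 2 := by
  have hcs := neg_le_of_abs_le (abs_real_inner_le_norm (gradient f x) (y - x))
  nlinarith [sq_nonneg (‖gradient f x‖ - c * ‖y - x‖)]

theorem le_of_inexact_gradient_step (hf : Differentiable ℝ f)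
    (hlip : ∀ x y, ‖gradient f x - gradient f y‖ ≤ L * ‖x - y‖) (hL : 0 ≤ L) {α ε M : ℝ}
    (hα : 0 ≤ α) {x G : E} (hG : ‖G - gradient f x‖ ≤ ε) (hgM : ‖gradient f x‖ ≤ M) :
    f (x - α • G) ≤ f x - α * (1 - α * L / 2) * ‖gradient f x‖ ^ 2
      + (α ^ 2 * L * ε ^ 2 / 2 + α * (α * L + 1) * ε * M) := by
  set g := gradient f x
  have hdesc := le_add_inner_gradient_add_of_lipschitz_gradient hf hlip x (x - α • G)
  rw [sub_sub_cancel_left, inner_neg_right, real_inner_smul_right, norm_neg, norm_smul,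
    Real.norm_of_nonneg hα, mul_pow] at hdesc
  have hε : 0 ≤ ε := (norm_nonneg _).trans hG
  have hinner : ‖g‖ ^ 2 - M * ε ≤ inner ℝ g G := by
    have hsplit : inner ℝ g G = ‖g‖ ^ 2 + inner ℝ g (G - g) := by
      rw [inner_sub_right, real_inner_self_eq_norm_sq]; ring
    have herr : inner ℝ g (G - g) ≥ -(M * ε) := by
      refine le_trans ?_ (neg_le_of_abs_le (abs_real_inner_le_norm g (G - g)))
      exact neg_le_neg (mul_le_mul hgM hG (norm_nonneg _) ((norm_nonneg _).trans hgM))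
    linarith
  have hnorm : ‖G‖ ^ 2 ≤ ‖g‖ ^ 2 + 2 * ε * M + ε ^ 2 := by
    have hG' : ‖G‖ ≤ ‖g‖ + ε := (norm_le_norm_add_norm_sub' G g).trans (by gcongr)
    nlinarith [norm_nonneg G, norm_nonneg g]
  calc f (x - α • G) ≤ f x + -(α * inner ℝ g G) + L / 2 * (α ^ 2 * ‖G‖ ^ 2) := hdesc
    _ ≤ f x + -(α * (‖g‖ ^ 2 - M * ε)) + L / 2 * (α ^ 2 * (‖g‖ ^ 2 + 2 * ε * M + ε ^ 2)) := by
        gcongr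
    _ = _ := by ring

theorem sub_le_of_inexact_gradient_step (hf : Differentiable ℝ f)
    (hlip : ∀ x y, ‖gradient f x - gradient f y‖ ≤ L * ‖x - y‖) (hL : 0 ≤ L) (hc : 0 < c)
    {α ε M : ℝ} (hα : 0 ≤ α) (hαL : α * L ≤ 2) {x y G : E}
    (hconv : f y ≥ f x + inner ℝ (gradient f x) (y - x) + c / 2 * ‖y - x‖ ^ 2)
    (hG : ‖G - gradient f x‖ ≤ ε) (hgM : ‖gradient f x‖ ≤ M) :
    f (x - α • G) - f y ≤ (1 - α * c * (2 - α * L)) * (f x - f y)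
      + (α ^ 2 * L * ε ^ 2 / 2 + α * (α * L + 1) * ε * M) := by
  have hdecrease : 0 ≤ α * (1 - α * L / 2) := mul_nonneg hα (by linarith)
  have := mul_le_mul_of_nonneg_left (two_mul_sub_le_norm_gradient_sq hc hconv) hdecrease
  linarith [le_of_inexact_gradient_step hf hlip hL hα hG hgM]

end InnerProductSpace

theorem inexact_gradient_descent_limsup_general (D : ℕ)
    (f : EuclideanSpace ℝ (Fin D) → ℝ) (L₀ c α ε M : ℝ)
    (hdiff : Differentiable ℝ f)
    (hlip : ∀ θ θ' : EuclideanSpace ℝ (Fin D),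
      ‖gradient f θ - gradient f θ'‖ ≤ L₀ * ‖θ - θ'‖)
    (hconv : ∀ θ θ' : EuclideanSpace ℝ (Fin D),
      f θ' ≥ f θ + (inner ℝ (gradient f θ) (θ' - θ) : ℝ) + c / 2 * ‖θ' - θ‖ ^ 2)
    (hc₀ : 0 < c) (hcL : c < L₀) (hα₀ : 0 < α) (hα : α < 2 / L₀)
    (θstar : EuclideanSpace ℝ (Fin D)) (hmin : ∀ x, f θstar ≤ f x)
    (θ : ℕ → EuclideanSpace ℝ (Fin D)) (G : ℕ → EuclideanSpace ℝ (Fin D))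
    (hupd : ∀ k, θ (k + 1) = θ k - α • G k)
    (hG : ∀ k, ‖G k - gradient f (θ k)‖ ≤ ε)
    (hgradM : ∀ k, ‖gradient f (θ k)‖ ≤ M) :
    Filter.limsup (fun k => f (θ k) - f θstar) Filter.atTop ≤
      (α * L₀ * ε ^ 2 + (2 * α * L₀ + 2) * ε * M) / (4 * c - 2 * α * L₀ * c) := by
  have hL₀ : 0 < L₀ := hc₀.trans hcL
  have hαL : α * L₀ < 2 := by linarith [(lt_div_iff₀ hL₀).mp hα]
  have hgap : 0 < 2 - α * L₀ := sub_pos.2 hαL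
  -- `α c (2 - α L₀) ≤ α L₀ (2 - α L₀) ≤ 1`
  have hρ₀ : 0 ≤ 1 - α * c * (2 - α * L₀) := by
    nlinarith [sq_nonneg (α * L₀ - 1), mul_le_mul_of_nonneg_left hcL.le
      (mul_nonneg hα₀.le hgap.le)]
  have hρ₁ : 1 - α * c * (2 - α * L₀) < 1 := by
    linarith [mul_pos (mul_pos hα₀ hc₀) hgap]
  have hstep : ∀ k, f (θ (k + 1)) - f θstar ≤ (1 - α * c * (2 - α * L₀)) * (f (θ k) - f θstar)
      + (α ^ 2 * L₀ * ε ^ 2 / 2 + α * (α * L₀ + 1) * ε * M) := fun k =>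
    hupd k ▸ sub_le_of_inexact_gradient_step hdiff hlip hL₀.le hc₀ hα₀.le hαL.le
      (hconv _ _) (hG k) (hgradM k)
  convert limsup_le_div_of_le_mul_add (e := fun k => f (θ k) - f θstar) hρ₀ hρ₁
    (fun k => sub_nonneg.2 (hmin (θ k))) hstep using 1
  rw [div_eq_div_iff (by nlinarith) (by nlinarith)]
  ring

theorem inexact_gradient_descent_limsup (D : ℕ)
    (f : EuclideanSpace ℝ (Fin D) → ℝ) (L₀ c α ε M : ℝ)
    (hdiff : Differentiable ℝ f)
    (hlip : ∀ θ θ' : EuclideanSpace ℝ (Fin D),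
      ‖gradient f θ - gradient f θ'‖ ≤ L₀ * ‖θ - θ'‖)
    (hconv : ∀ θ θ' : EuclideanSpace ℝ (Fin D),
      f θ' ≥ f θ + (inner ℝ (gradient f θ) (θ' - θ) : ℝ) + c / 2 * ‖θ' - θ‖ ^ 2)
    (hc₀ : 0 < c) (hcL : c < L₀) (hα₀ : 0 < α) (hα : α < 2 / L₀)
    (hε : 0 ≤ ε) (hM : 0 ≤ M)
    (θstar : EuclideanSpace ℝ (Fin D)) (hmin : ∀ x, f θstar ≤ f x)
    (θ : ℕ → EuclideanSpace ℝ (Fin D)) (G : ℕ → EuclideanSpace ℝ (Fin D))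
    (hupd : ∀ k, θ (k + 1) = θ k - α • G k)
    (hG : ∀ k, ‖G k - gradient f (θ k)‖ ≤ ε)
    (hgradM : ∀ k, ‖gradient f (θ k)‖ ≤ M) :
    Filter.limsup (fun k => f (θ k) - f θstar) Filter.atTop ≤
      (α * L₀ * ε ^ 2 + (2 * α * L₀ + 2) * ε * M) / (4 * c - 2 * α * L₀ * c) :=
  inexact_gradient_descent_limsup_general D f L₀ c α ε M hdiff hlip hconv hc₀ hcL hα₀ hα θstar hmin
    θ G hupd hG hgradM
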